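/- arXiv:2604.04668 — 2 statements merged into one kernel-verified Lean document; each statement's English description precedes it below -/
import Mathlib

section
/- Let v ∈ ℂ^6 be a hexagon with ∑_{k=0}^5 v_k = 0 and ∑_{k=0}^5 (−1)^k v_k = 0 (equivalently, its Fourier coefficients satisfy ξ_0 = ξ_3 = 0). Then Z(Mv) = (3/8)·Z(v). -/
open Complex

set_option maxHeartbeats 1000000

noncomputable section

/-- The midpoint map on hexagons: `(Mv)_k = (v_k + v_{k+1})/2`, indices mod 6. -/
def M6 (v : Fin 6 → ℂ) : Fin 6 → ℂ := fun k => (v k + v (k + 1)) / 2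

/-- The quantity `Z(v) = ∑ (v_k + v_{k+1})·Im(conj(v_k)·v_{k+1})`. -/
def Z6 (v : Fin 6 → ℂ) : ℂ :=
  ∑ k : Fin 6, (v k + v (k + 1)) * (((starRingEnd ℂ) (v k) * v (k + 1)).im : ℂ)

lemma im_eq (z : ℂ) : (z.im : ℂ) = (z - (starRingEnd ℂ) z) / (2 * I) := by
  rw [Complex.sub_conj]
  field_simp
  push_cast
  ring

lemma Z6_eq (u : Fin 6 → ℂ) : Z6 u =
    ∑ k : Fin 6, (u k + u (k + 1)) *
      (((starRingEnd ℂ) (u k) * u (k + 1) - u k * (starRingEnd ℂ) (u (k + 1))) / (2 * I)) := by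
  unfold Z6
  refine Finset.sum_congr rfl fun k _ => ?_
  rw [im_eq]
  simp [map_mul]

theorem Z_scaling (v : Fin 6 → ℂ)
    (h0 : ∑ k : Fin 6, v k = 0)
    (h3 : ∑ k : Fin 6, (-1 : ℂ) ^ (k : ℕ) * v k = 0) :
    Z6 (M6 v) = (3 / 8) * Z6 v := by
  simp only [Fin.sum_univ_six] at h0 h3
  norm_num [show ((3:Fin 6):ℕ) = 3 from rfl, show ((4:Fin 6):ℕ) = 4 from rfl,
    show ((5:Fin 6):ℕ) = 5 from rfl] at h3
  have h4 : v 4 = -(v 0 + v 2) := by linear_combination (h0 + h3)/2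
  have h5 : v 5 = -(v 1 + v 3) := by linear_combination (h0 - h3)/2
  rw [Z6_eq, Z6_eq]
  simp only [M6, Fin.sum_univ_six, show (4:Fin 6)+1 = 5 from rfl, show (5:Fin 6)+1 = 0 from rfl,
    show (3:Fin 6)+1 = 4 from rfl, show (2:Fin 6)+1 = 3 from rfl,
    show (1:Fin 6)+1 = 2 from rfl, show (0:Fin 6)+1 = 1 from rfl,
    map_div₀, map_add, map_ofNat]
  rw [h4, h5]
  simp only [map_neg, map_add]
  have hI : (2 : ℂ) * I ≠ 0 := by simp [Complex.I_ne_zero]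
  field_simp
  ring
end
end

section
/- Let v ∈ ℂ^6 be a hexagon with ∑_{k=0}^5 v_k = 0 and ∑_{k=0}^5 (−1)^k v_k = 0 (equivalently, ξ_0 = ξ_3 = 0). Then for every natural number n, Z(M^n v) = (3/8)^n · Z(v). -/
open Complex

noncomputable section

lemma key (v : Fin 6 → ℂ) (h4 : v 4 = -v 0 - v 2) (h5 : v 5 = -v 1 - v 3) :
    Z6 (M6 v) = (3/8 : ℂ) * Z6 v := by
  simp only [Z6, M6, Fin.sum_univ_six, Fin.isValue]
  norm_num
  rw [h4, h5]
  rw [Complex.ext_iff]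
  constructor <;>
  · simp [h4, h5, Complex.add_re, Complex.add_im, Complex.mul_re, Complex.mul_im, Complex.div_re,
      Complex.div_im, Complex.normSq, Complex.sub_re, Complex.sub_im, Complex.neg_re,
      Complex.neg_im]
    ring

lemma inv_step (v : Fin 6 → ℂ) (h4 : v 4 = -v 0 - v 2) (h5 : v 5 = -v 1 - v 3) :
    M6 v 4 = -M6 v 0 - M6 v 2 ∧ M6 v 5 = -M6 v 1 - M6 v 3 := by
  simp only [M6, show (4:Fin 6)+1 = 5 from rfl, show (5:Fin 6)+1 = 0 from rfl,
    show (0:Fin 6)+1 = 1 from rfl, show (1:Fin 6)+1 = 2 from rfl,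
    show (2:Fin 6)+1 = 3 from rfl, show (3:Fin 6)+1 = 4 from rfl]
  rw [h4, h5]
  constructor <;> ring

theorem Z_scaling_iterated (v : Fin 6 → ℂ)
    (h0 : ∑ k : Fin 6, v k = 0)
    (h3 : ∑ k : Fin 6, (-1 : ℂ) ^ (k : ℕ) * v k = 0) :
    ∀ n : ℕ, Z6 (M6^[n] v) = (3 / 8 : ℂ) ^ n * Z6 v := by
  have hbase : v 4 = -v 0 - v 2 ∧ v 5 = -v 1 - v 3 := by
    simp only [Fin.sum_univ_six] at h0 h3
    norm_num [show ((3:Fin 6):ℕ)=3 from rfl, show ((4:Fin 6):ℕ)=4 from rfl,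
      show ((5:Fin 6):ℕ)=5 from rfl] at h3
    constructor
    · linear_combination (h0 + h3) / 2
    · linear_combination (h0 - h3) / 2
  have hinv : ∀ n, M6^[n] v 4 = -M6^[n] v 0 - M6^[n] v 2 ∧
      M6^[n] v 5 = -M6^[n] v 1 - M6^[n] v 3 := by
    intro n
    induction n with
    | zero => exact hbase
    | succ m ih =>
      rw [Function.iterate_succ_apply']
      exact inv_step _ ih.1 ih.2
  intro n
  induction n with
  | zero => simp
  | succ m ih =>
    rw [Function.iterate_succ_apply', key _ (hinv m).1 (hinv m).2, ih, pow_succ]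
    ring
end
end
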